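/- arXiv:1304.1202 — 6 statements merged into one kernel-verified Lean document; each statement's English description precedes it below -/
import Mathlib

section
/- Let q be a prime power. The Hermitian curve H = {(x,y) ∈ F_{q²} × F_{q²} : x^{q+1} = y + y^q} has exactly q³ points. -/
open Polynomial Finset

/-- Let `q` be a prime power and `F` the finite field with `q²` elements.
The Hermitian curve `H = {(x,y) : x^(q+1) = y + y^q}` has exactly `q³` points. -/
theorem hermitian_curve_card {F : Type*} [Field F] [Fintype F] (q : ℕ)
    (hq : ∃ p n : ℕ, p.Prime ∧ 0 < n ∧ q = p ^ n)
    (hcard : Fintype.card F = q ^ 2) :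
    Set.ncard {p : F × F | p.1 ^ (q + 1) = p.2 + p.2 ^ q} = q ^ 3 := by
  classical
  obtain ⟨p, n, hp, hn, hqeq⟩ := hq
  have hq2 : 2 ≤ q := by
    rw [hqeq]
    exact Nat.one_lt_pow (by omega) hp.one_lt
  have hq0 : q ≠ 0 := by omega
  -- characteristic
  have hchar : CharP F p := by
    obtain ⟨p', hp'char⟩ := CharP.exists F
    haveI := hp'char
    obtain ⟨m, hp', hcard'⟩ := FiniteField.card F p'
    have : p' = p := by
      have hdvd : p' ∣ q ^ 2 := by
        rw [← hcard, hcard']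
        exact dvd_pow_self p' (by positivity)
      rw [hqeq, ← pow_mul] at hdvd
      have := hp'.dvd_of_dvd_pow hdvd
      exact ((Nat.prime_dvd_prime_iff_eq hp' hp).mp this)
    rwa [this] at hp'char
  haveI := hchar
  haveI : ExpChar F p := ExpChar.prime hp
  have hfrob : ∀ a b : F, (a + b) ^ q = a ^ q + b ^ q := by
    intro a b; rw [hqeq]; exact add_pow_expChar_pow a b p n
  have hsub : ∀ a b : F, (a - b) ^ q = a ^ q - b ^ q := by
    intro a b
    have := hfrob (a - b) b
    rw [sub_add_cancel] at this
    linear_combination -this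
  have hpowcard : ∀ a : F, a ^ q ^ 2 = a := by
    intro a; rw [← hcard]; exact FiniteField.pow_card a
  -- root counting lemma
  have key : ∀ (P : F[X]), P ≠ 0 → ∀ s : Finset F, (∀ x ∈ s, P.eval x = 0) →
      s.card ≤ P.natDegree := by
    intro P hP s hs
    calc s.card ≤ P.roots.toFinset.card :=
          Finset.card_le_card (fun x hx => by
            simp only [Multiset.mem_toFinset, mem_roots hP, IsRoot]
            exact hs x hx)
      _ ≤ Multiset.card P.roots := P.roots.toFinset_card_le
      _ ≤ P.natDegree := P.card_roots'
  have hdegX : (X : F[X]).degree < (q : ℕ) := by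
    rw [degree_X]
    exact_mod_cast (by omega : 1 < q)
  -- kernel and fixed-point sets
  set K : Finset F := univ.filter (fun y : F => y + y ^ q = 0) with hKdef
  set R : Finset F := univ.filter (fun z : F => z ^ q = z) with hRdef
  have hK : K.card ≤ q := by
    have h1 : (X ^ q + X : F[X]) ≠ 0 := (monic_X_pow_add hdegX).ne_zero
    have := key (X ^ q + X) h1 K (fun x hx => by
      simp only [hKdef, mem_filter] at hx
      simp only [eval_add, eval_pow, eval_X]
      linear_combination hx.2)
    refine this.trans ?_
    refine (natDegree_add_le _ _).trans ?_
    simp [natDegree_X_pow]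
    omega
  have hR : R.card ≤ q := by
    have h1 : (X ^ q - X : F[X]) ≠ 0 := (monic_X_pow_sub hdegX).ne_zero
    have := key (X ^ q - X) h1 R (fun x hx => by
      simp only [hRdef, mem_filter] at hx
      simp only [eval_sub, eval_pow, eval_X]
      linear_combination hx.2)
    refine this.trans ?_
    refine (natDegree_sub_le _ _).trans ?_
    simp [natDegree_X_pow]
    omega
  -- image of trace
  set I : Finset F := univ.image (fun y : F => y + y ^ q) with hIdef
  have hIR : I ⊆ R := by
    intro z hz
    simp only [hIdef, mem_image] at hz
    obtain ⟨y, _, rfl⟩ := hz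
    simp only [hRdef, mem_filter, mem_univ, true_and]
    rw [hfrob, ← pow_mul, ← pow_two, hpowcard]
    ring
  -- fibers of trace all have cardinality K.card
  have fiber : ∀ c ∈ I, (univ.filter fun y : F => y + y ^ q = c).card = K.card := by
    intro c hc
    simp only [hIdef, mem_image] at hc
    obtain ⟨y₀, -, hy₀⟩ := hc
    refine Finset.card_bij' (fun y _ => y - y₀) (fun y _ => y + y₀) ?_ ?_ ?_ ?_
    · intro a ha
      simp only [mem_filter, mem_univ, true_and] at ha ⊢
      simp only [hKdef, mem_filter, mem_univ, true_and]
      rw [hsub]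
      linear_combination ha - hy₀
    · intro a ha
      simp only [hKdef, mem_filter, mem_univ, true_and] at ha
      simp only [mem_filter, mem_univ, true_and]
      rw [hfrob]
      linear_combination ha + hy₀
    · intros; ring
    · intros; ring
  -- q^2 = I.card * K.card
  have hsplit : q ^ 2 = I.card * K.card := by
    rw [← hcard, ← Finset.card_univ,
      Finset.card_eq_sum_card_fiberwise
        (f := fun y : F => y + y ^ q) (t := I)
        (fun x _ => mem_image_of_mem _ (mem_univ x))]
    rw [Finset.sum_congr rfl (fun c hc => fiber c hc), Finset.sum_const, smul_eq_mul]
  have hIcard : I.card = q := by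
    have hIq : I.card ≤ q := (Finset.card_le_card hIR).trans hR
    nlinarith [hsplit, hIq, hK]
  have hKcard : K.card = q := by nlinarith [hsplit, hIcard, hK]
  have hIRe : I = R := Finset.eq_of_subset_of_card_le hIR (by omega)
  -- main count
  set S : Finset (F × F) := univ.filter (fun pr : F × F => pr.1 ^ (q + 1) = pr.2 + pr.2 ^ q)
    with hSdef
  have hset : {p : F × F | p.1 ^ (q + 1) = p.2 + p.2 ^ q} = ↑S := by
    ext pr; simp [hSdef]
  rw [hset, Set.ncard_coe_finset]
  have hScard : S.card = ∑ x : F, (univ.filter fun y : F => y + y ^ q = x ^ (q + 1)).card := by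
    rw [Finset.card_eq_sum_card_fiberwise (f := Prod.fst) (t := univ) (fun x _ => mem_univ _)]
    refine Finset.sum_congr rfl fun x _ => ?_
    refine Finset.card_bij' (fun pr _ => pr.2) (fun y _ => (x, y)) ?_ ?_ ?_ ?_
    · intro a ha
      simp only [hSdef, mem_filter, mem_univ, true_and] at ha ⊢
      obtain ⟨h1, h2⟩ := ha
      rw [← h2]
      exact h1.symm
    · intro a ha
      simp only [mem_filter, mem_univ, true_and] at ha
      simp only [hSdef, mem_filter, Finset.mem_filter, mem_univ, true_and]
      exact ⟨ha.symm, trivial⟩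
    · intro a ha
      simp only [hSdef, mem_filter, Finset.mem_filter, mem_univ, true_and] at ha
      exact Prod.ext ha.2.symm rfl
    · intros; rfl
  rw [hScard]
  have hnorm : ∀ x : F, x ^ (q + 1) ∈ I := by
    intro x
    rw [hIRe]
    simp only [hRdef, mem_filter, mem_univ, true_and]
    rw [← pow_mul]
    have : (q + 1) * q = q ^ 2 + q := by ring
    rw [this, pow_add, hpowcard]
    ring
  rw [Finset.sum_congr rfl (fun x _ => (fiber _ (hnorm x)))]
  rw [Finset.sum_const, smul_eq_mul, Finset.card_univ, hcard, hKcard]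
  ring
end

section
/- Let q ≥ 2 be an integer and let r be an integer with r ≥ q(q−1). Then the number of pairs (i,j) of nonnegative integers with j ≤ q−1 and qi + (q+1)j < r equals r − q(q−1)/2. -/
/-!
Every `n ≥ q(q-1)` has exactly one expression `n = q·i + (q+1)·j` with `j ≤ q - 1`: reducing
`n = q·(i + j) + j` modulo `q` forces `j = n % q` and `i = n / q - n % q`, which is a natural number
because `n / q ≥ q - 1 ≥ n % q`. So from `r = q(q-1)` on, raising `r` by one adds exactly one pair.
At `r = q(q-1)` the pairs are those with `i + j < q - 1`, a triangle with `q(q-1)/2` points.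
-/

def hermitianDegree (q : ℕ) (p : ℕ × ℕ) : ℕ := q * p.1 + (q + 1) * p.2

def hermitianExponents (q r : ℕ) : Set (ℕ × ℕ) := {p | p.2 ≤ q - 1 ∧ hermitianDegree q p < r}

theorem finite_setOf_add_lt (n : ℕ) : {p : ℕ × ℕ | p.1 + p.2 < n}.Finite :=
  ((Set.finite_Iio n).prod (Set.finite_Iio n)).subset fun p (hp : p.1 + p.2 < n) =>
    ⟨show p.1 < n by omega, show p.2 < n by omega⟩

open Finset.HasAntidiagonal in
theorem ncard_setOf_add_lt (n : ℕ) : {p : ℕ × ℕ | p.1 + p.2 < n}.ncard = (n + 1).choose 2 := by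
  induction n with
  | zero => simp
  | succ n ih =>
    have hsplit : {p : ℕ × ℕ | p.1 + p.2 < n + 1} =
        {p : ℕ × ℕ | p.1 + p.2 < n} ∪ ↑(antidiagonal n) := by
      ext p
      simp only [Set.mem_ofPred_eq, Set.mem_union, Finset.mem_coe, mem_antidiagonal]
      omega
    have hdisj : Disjoint {p : ℕ × ℕ | p.1 + p.2 < n} ↑(antidiagonal n) := by
      rw [Set.disjoint_left]
      intro p hlt heq
      simp only [Set.mem_ofPred_eq, Finset.mem_coe, mem_antidiagonal] at hlt heq
      omega
    rw [hsplit, Set.ncard_union_eq hdisj (finite_setOf_add_lt n), ih, Set.ncard_coe_finset,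
      Finset.Nat.card_antidiagonal, Nat.choose_succ_succ' (n + 1), Nat.choose_one_right]
    exact add_comm _ _

section

variable {q : ℕ}

theorem finite_hermitianExponents (hq : 0 < q) (r : ℕ) : (hermitianExponents q r).Finite :=
  ((Set.finite_Iio r).prod (Set.finite_Iio q)).subset
    fun p (⟨hb, hdeg⟩ : p.2 ≤ q - 1 ∧ q * p.1 + (q + 1) * p.2 < r) => by
      have : p.1 ≤ q * p.1 := Nat.le_mul_of_pos_left p.1 hq
      exact ⟨show p.1 < r by omega, show p.2 < q by omega⟩

theorem hermitianExponents_mul_pred_eq :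
    hermitianExponents q (q * (q - 1)) = {p : ℕ × ℕ | p.1 + p.2 < q - 1} := by
  rcases q with _ | m
  · simp [hermitianExponents]
  ext ⟨a, b⟩
  simp only [hermitianExponents, hermitianDegree, Set.mem_ofPred_eq, Nat.add_sub_cancel]
  constructor
  · rintro ⟨-, hdeg⟩
    have : (m + 1) * (a + b) < (m + 1) * m := by nlinarith
    exact Nat.lt_of_mul_lt_mul_left this
  · intro h
    exact ⟨by omega, by nlinarith⟩

theorem hermitianDegree_eq_iff (hq : 0 < q) {n : ℕ} (hn : q * (q - 1) ≤ n) {p : ℕ × ℕ}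
    (hp : p.2 ≤ q - 1) : hermitianDegree q p = n ↔ p = (n / q - n % q, n % q) := by
  obtain ⟨a, b⟩ := p
  have hb : b < q := Nat.lt_of_le_sub_one hq hp
  have hdiv : q - 1 ≤ n / q := (Nat.le_div_iff_mul_le hq).2 (by rw [mul_comm]; exact hn)
  have hmod : n % q < q := Nat.mod_lt n hq
  have hdeg : hermitianDegree q (a, b) = q * (a + b) + b := by
    simp only [hermitianDegree]; ring
  rw [hdeg, Prod.mk.injEq]
  constructor
  · rintro rfl
    rw [Nat.mul_add_mod, Nat.mod_eq_of_lt hb, Nat.mul_add_div hq, Nat.div_eq_of_lt hb]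
    omega
  · rintro ⟨rfl, rfl⟩
    rw [Nat.sub_add_cancel (by omega)]
    exact Nat.div_add_mod n q

theorem hermitianExponents_succ (hq : 0 < q) {n : ℕ} (hn : q * (q - 1) ≤ n) :
    hermitianExponents q (n + 1) = insert (n / q - n % q, n % q) (hermitianExponents q n) := by
  ext p
  simp only [hermitianExponents, Set.mem_ofPred_eq, Set.mem_insert_iff, Nat.lt_succ_iff_lt_or_eq]
  constructor
  · rintro ⟨hp, hlt | heq⟩
    · exact .inr ⟨hp, hlt⟩
    · exact .inl ((hermitianDegree_eq_iff hq hn hp).1 heq)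
  · rintro (rfl | ⟨hp, hlt⟩)
    · have hp : n % q ≤ q - 1 := Nat.le_sub_one_of_lt (Nat.mod_lt n hq)
      exact ⟨hp, .inr ((hermitianDegree_eq_iff hq hn hp).2 rfl)⟩
    · exact ⟨hp, .inl hlt⟩

theorem ncard_hermitianExponents (hq : 0 < q) {r : ℕ} (hr : q * (q - 1) ≤ r) :
    (hermitianExponents q r).ncard = r - q * (q - 1) / 2 := by
  induction r, hr using Nat.le_induction with
  | base =>
    rw [hermitianExponents_mul_pred_eq, ncard_setOf_add_lt, Nat.sub_add_cancel hq,
      Nat.choose_two_right]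
    obtain ⟨k, hk⟩ := Nat.even_mul_pred_self q
    omega
  | succ n hn ih =>
    have hnew : (n / q - n % q, n % q) ∉ hermitianExponents q n := fun h =>
      h.2.ne ((hermitianDegree_eq_iff hq hn h.1).2 rfl)
    rw [hermitianExponents_succ hq hn,
      Set.ncard_insert_of_notMem hnew (finite_hermitianExponents hq n), ih]
    have : q * (q - 1) / 2 ≤ n := (Nat.div_le_self _ _).trans hn
    omega

end

/-- Let `q ≥ 2` and let `r ≥ q(q−1)`. The number of pairs `(i,j)` of nonnegative
integers with `j ≤ q − 1` and `q·i + (q+1)·j < r` equals `r − q(q−1)/2`. -/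
theorem hermitian_monomial_count (q r : ℕ) (hq : 2 ≤ q) (hr : q * (q - 1) ≤ r) :
    Set.ncard {p : ℕ × ℕ | p.2 ≤ q - 1 ∧ q * p.1 + (q + 1) * p.2 < r} =
      r - q * (q - 1) / 2 :=
  ncard_hermitianExponents (by omega) hr
end

section
/- Let q be a prime power, let H ⊆ F_{q²}² be the Hermitian curve, let Φ_H be the group of maps σ_{a,b,c}, and let r be a positive integer. Then the Hermitian code Herm_q[r] is Φ_H-invariant: for every f ∈ Herm_q[r] and every σ ∈ Φ_H, the composed function f ∘ σ : H → F_{q²} belongs to Herm_q[r]. -/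
/-- The Hermitian curve `H = {(x,y) ∈ F² : x^(q+1) = y + y^q}` (here `F` is the field
with `q²` elements; `x^(q+1)` is the norm and `y + y^q` the trace down to `F_q`). -/
def Hset (F : Type*) [Field F] (q : ℕ) : Set (F × F) :=
  {p | p.1 ^ (q + 1) = p.2 + p.2 ^ q}

/-- The map `σ_{a,b,c} : (x,y) ↦ (a·x + b, a^(q+1)·y + a·b^q·x + c)`. -/
def sigmaMap {F : Type*} [Field F] (q : ℕ) (a b c : F) : F × F → F × F :=
  fun p => (a * p.1 + b, a ^ (q + 1) * p.2 + a * b ^ q * p.1 + c)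

/-- The Hermitian curve as a subtype (the domain of the Hermitian code). -/
abbrev Hsub (F : Type*) [Field F] (q : ℕ) : Type _ :=
  {p : F × F // p.1 ^ (q + 1) = p.2 + p.2 ^ q}

/-- The Hermitian code `Herm_q[r] ⊆ (H → F)`: the `F`-span of the monomial functions
`(x,y) ↦ x^i y^j` with `j < q` and `q·i + (q+1)·j < r`. -/
def HermCode (F : Type*) [Field F] (q r : ℕ) : Submodule F (Hsub F q → F) :=
  Submodule.span F {f : Hsub F q → F |
    ∃ i j : ℕ, j < q ∧ q * i + (q + 1) * j < r ∧
      f = fun p => p.1.1 ^ i * p.1.2 ^ j}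

/-- Auxiliary span: monomials with `y`-degree at most `j0` and weighted degree at most `n`. -/
def Vspan (F : Type*) [Field F] (q n j0 : ℕ) : Submodule F (Hsub F q → F) :=
  Submodule.span F {f : Hsub F q → F |
    ∃ i j : ℕ, j ≤ j0 ∧ q * i + (q + 1) * j ≤ n ∧
      f = fun p => p.1.1 ^ i * p.1.2 ^ j}

lemma Vspan_mono {F : Type*} [Field F] (q : ℕ) {n n' j0 j0' : ℕ} (hn : n ≤ n') (hj : j0 ≤ j0') :
    Vspan F q n j0 ≤ Vspan F q n' j0' :=
  Submodule.span_mono (fun f hf => by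
    obtain ⟨i, j, h1, h2, h3⟩ := hf
    exact ⟨i, j, h1.trans hj, h2.trans hn, h3⟩)

lemma mono_mem {F : Type*} [Field F] (q : ℕ) {n j0 i j : ℕ}
    (h1 : j ≤ j0) (h2 : q * i + (q + 1) * j ≤ n) :
    (fun p : Hsub F q => p.1.1 ^ i * p.1.2 ^ j) ∈ Vspan F q n j0 :=
  Submodule.subset_span ⟨i, j, h1, h2, rfl⟩

lemma mulx {F : Type*} [Field F] (q : ℕ) {n j0 : ℕ} {f : Hsub F q → F}
    (hf : f ∈ Vspan F q n j0) :
    (fun p : Hsub F q => p.1.1 * f p) ∈ Vspan F q (n + q) j0 := by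
  induction hf using Submodule.span_induction with
  | mem g hg =>
    obtain ⟨i, j, h1, h2, rfl⟩ := hg
    have he : (fun p : Hsub F q => p.1.1 * (p.1.1 ^ i * p.1.2 ^ j)) =
        fun p : Hsub F q => p.1.1 ^ (i + 1) * p.1.2 ^ j := by
      funext p; ring
    rw [he]
    refine mono_mem q h1 ?_
    have : q * (i + 1) = q * i + q := by ring
    omega
  | zero =>
    have : (fun p : Hsub F q => p.1.1 * (0 : Hsub F q → F) p) = 0 := by
      funext p; simp
    rw [this]; exact Submodule.zero_mem _
  | add g h _ _ hg hh =>
    have : (fun p : Hsub F q => p.1.1 * (g + h) p) =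
        (fun p : Hsub F q => p.1.1 * g p) + fun p : Hsub F q => p.1.1 * h p := by
      funext p; simp [mul_add]
    rw [this]; exact Submodule.add_mem _ hg hh
  | smul t g _ hg =>
    have : (fun p : Hsub F q => p.1.1 * (t • g) p) =
        t • fun p : Hsub F q => p.1.1 * g p := by
      funext p; simp [mul_left_comm]
    rw [this]; exact Submodule.smul_mem _ _ hg

lemma muly {F : Type*} [Field F] (q : ℕ) {n j0 : ℕ} {f : Hsub F q → F}
    (hf : f ∈ Vspan F q n j0) :
    (fun p : Hsub F q => p.1.2 * f p) ∈ Vspan F q (n + (q + 1)) (j0 + 1) := by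
  induction hf using Submodule.span_induction with
  | mem g hg =>
    obtain ⟨i, j, h1, h2, rfl⟩ := hg
    have he : (fun p : Hsub F q => p.1.2 * (p.1.1 ^ i * p.1.2 ^ j)) =
        fun p : Hsub F q => p.1.1 ^ i * p.1.2 ^ (j + 1) := by
      funext p; ring
    rw [he]
    refine mono_mem q (by omega) ?_
    have : (q + 1) * (j + 1) = (q + 1) * j + (q + 1) := by ring
    omega
  | zero =>
    have : (fun p : Hsub F q => p.1.2 * (0 : Hsub F q → F) p) = 0 := by
      funext p; simp
    rw [this]; exact Submodule.zero_mem _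
  | add g h _ _ hg hh =>
    have : (fun p : Hsub F q => p.1.2 * (g + h) p) =
        (fun p : Hsub F q => p.1.2 * g p) + fun p : Hsub F q => p.1.2 * h p := by
      funext p; simp [mul_add]
    rw [this]; exact Submodule.add_mem _ hg hh
  | smul t g _ hg =>
    have : (fun p : Hsub F q => p.1.2 * (t • g) p) =
        t • fun p : Hsub F q => p.1.2 * g p := by
      funext p; simp [mul_left_comm]
    rw [this]; exact Submodule.smul_mem _ _ hg

lemma hermAuxPowMem {F : Type*} [Field F] (q : ℕ) (A B C : F) :
    ∀ j : ℕ, (fun p : Hsub F q => (A * p.1.2 + B * p.1.1 + C) ^ j) ∈ Vspan F q ((q + 1) * j) j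
  | 0 => by
    have : (fun p : Hsub F q => (A * p.1.2 + B * p.1.1 + C) ^ 0) =
        fun p : Hsub F q => p.1.1 ^ 0 * p.1.2 ^ 0 := by
      funext p; simp
    rw [this]; exact mono_mem q le_rfl (by simp)
  | (j + 1) => by
    have ih := hermAuxPowMem q A B C j
    have h1 := muly q ih
    have h2 := mulx q ih
    have key : (fun p : Hsub F q => (A * p.1.2 + B * p.1.1 + C) ^ (j + 1)) =
        A • (fun p : Hsub F q => p.1.2 * (A * p.1.2 + B * p.1.1 + C) ^ j) +
        B • (fun p : Hsub F q => p.1.1 * (A * p.1.2 + B * p.1.1 + C) ^ j) +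
        C • fun p : Hsub F q => (A * p.1.2 + B * p.1.1 + C) ^ j := by
      funext p
      simp only [Pi.add_apply, Pi.smul_apply, smul_eq_mul]
      ring
    rw [key]
    have harith : (q + 1) * (j + 1) = (q + 1) * j + (q + 1) := by ring
    refine Submodule.add_mem _ (Submodule.add_mem _ ?_ ?_) ?_
    · exact Submodule.smul_mem _ _ (Vspan_mono q (by omega) le_rfl h1)
    · exact Submodule.smul_mem _ _ (Vspan_mono q (by omega) (by omega) h2)
    · exact Submodule.smul_mem _ _ (Vspan_mono q (by omega) (by omega) ih)

lemma xpow_mul {F : Type*} [Field F] (q : ℕ) {n j0 : ℕ} {f : Hsub F q → F}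
    (hf : f ∈ Vspan F q n j0) :
    ∀ l : ℕ, (fun p : Hsub F q => p.1.1 ^ l * f p) ∈ Vspan F q (n + q * l) j0
  | 0 => by
    have : (fun p : Hsub F q => p.1.1 ^ 0 * f p) = f := by
      funext p; simp
    rw [this]; simpa using hf
  | (l + 1) => by
    have he : (fun p : Hsub F q => p.1.1 ^ (l + 1) * f p) =
        fun p : Hsub F q => p.1.1 * (p.1.1 ^ l * f p) := by
      funext p; ring
    have harith : n + q * (l + 1) = n + q * l + q := by ring
    rw [he, harith]
    exact mulx q (xpow_mul q hf l)

lemma gen_mem {F : Type*} [Field F] (q : ℕ) (a b A B C : F) (i j : ℕ) :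
    (fun p : Hsub F q => (a * p.1.1 + b) ^ i * (A * p.1.2 + B * p.1.1 + C) ^ j) ∈
      Vspan F q (q * i + (q + 1) * j) j := by
  have key : (fun p : Hsub F q => (a * p.1.1 + b) ^ i * (A * p.1.2 + B * p.1.1 + C) ^ j) =
      ∑ l ∈ Finset.range (i + 1), (a ^ l * b ^ (i - l) * (i.choose l : F)) •
        fun p : Hsub F q => p.1.1 ^ l * (A * p.1.2 + B * p.1.1 + C) ^ j := by
    funext p
    rw [Finset.sum_apply, add_pow, Finset.sum_mul]
    refine Finset.sum_congr rfl fun l _ => ?_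
    simp only [Pi.smul_apply, smul_eq_mul]
    ring
  rw [key]
  refine Submodule.sum_mem _ fun l hl => Submodule.smul_mem _ _ ?_
  have hli : l ≤ i := by
    have := Finset.mem_range.mp hl; omega
  have h := xpow_mul q (hermAuxPowMem q A B C j) l
  refine Vspan_mono q ?_ le_rfl h
  have : q * l ≤ q * i := Nat.mul_le_mul_left q hli
  omega

lemma Vspan_le_Herm {F : Type*} [Field F] (q : ℕ) {n j0 r : ℕ} (hn : n < r) (hj : j0 < q) :
    Vspan F q n j0 ≤ HermCode F q r :=
  Submodule.span_mono (fun f hf => by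
    obtain ⟨i, j, h1, h2, h3⟩ := hf
    exact ⟨i, j, lt_of_le_of_lt h1 hj, lt_of_le_of_lt h2 hn, h3⟩)

/-- The Hermitian code is `Φ_H`-invariant: composing a codeword of `Herm_q[r]` with any
automorphism `σ_{a,b,c}` of the Hermitian curve gives a codeword of `Herm_q[r]`. -/
theorem hermitian_code_invariant {F : Type*} [Field F] [Fintype F] (q : ℕ)
    (hq : ∃ p n : ℕ, p.Prime ∧ 0 < n ∧ q = p ^ n)
    (hcard : Fintype.card F = q ^ 2) (r : ℕ) (hr : 0 < r)
    (a b c : F) (ha : a ≠ 0) (hbc : (b, c) ∈ Hset F q)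
    (τ : Hsub F q → Hsub F q)
    (hτ : ∀ p : Hsub F q, (τ p : F × F) = sigmaMap q a b c (p : F × F))
    (f : Hsub F q → F) (hf : f ∈ HermCode F q r) :
    f ∘ τ ∈ HermCode F q r := by
  induction hf using Submodule.span_induction with
  | mem g hg =>
    obtain ⟨i, j, hjq, hw, rfl⟩ := hg
    have he : (fun p : Hsub F q => p.1.1 ^ i * p.1.2 ^ j) ∘ τ =
        fun p : Hsub F q =>
          (a * p.1.1 + b) ^ i * (a ^ (q + 1) * p.1.2 + a * b ^ q * p.1.1 + c) ^ j := by
      funext p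
      simp only [Function.comp_apply]
      rw [hτ p]
      simp [sigmaMap]
    rw [he]
    exact Vspan_le_Herm q hw hjq (gen_mem q a b (a ^ (q + 1)) (a * b ^ q) c i j)
  | zero =>
    have : (0 : Hsub F q → F) ∘ τ = 0 := rfl
    rw [this]; exact Submodule.zero_mem _
  | add g h _ _ hg hh =>
    have : (g + h) ∘ τ = g ∘ τ + h ∘ τ := rfl
    rw [this]; exact Submodule.add_mem _ hg hh
  | smul t g _ hg =>
    have : (t • g) ∘ τ = t • (g ∘ τ) := rfl
    rw [this]; exact Submodule.smul_mem _ _ hg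
end

section
/- Let q be a prime power, H the Hermitian curve, and m ≥ 1. The q^{3m} functions H^m → F_{q²} given by (x_1,y_1,…,x_m,y_m) ↦ ∏_{k=1}^m x_k^{i_k} y_k^{j_k}, where 0 ≤ i_k < q² and 0 ≤ j_k < q for all k, are linearly independent over F_{q²}; since |H^m| = q^{3m}, they form a basis of the F_{q²}-vector space of all functions H^m → F_{q²}. -/
/-!
The map `T y = y + y^q` is additive, its kernel lies among the roots of `X^q + X` and its image
among the roots of `X^q - X`; since `|im T| · |ker T| = |F| = q²`, every `t` with `t^q = t` has
exactly `q` preimages. As `x^(q+1)` is such a `t`, each vertical line meets `H` in `q` points.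
So a combination of the monomials vanishing on `H` is, for fixed `x`, a polynomial of degree `< q`
in `y` with `q` roots, and its coefficients are polynomials of degree `< q²` in `x` vanishing on
all of `F`. The same fibrewise argument over the first coordinate passes from `H^m` to `H^(m+1)`,
and `|H^m| = q^(3m)` is the number of monomials.
-/

open Finset Polynomial

section LinearIndependence

variable {K : Type*} [Field K]

theorem linearIndependent_pow_of_injective {Z : Type*} [Finite Z] {v : Z → K}
    (hv : Function.Injective v) {N : ℕ} (hN : N ≤ Nat.card Z) :
    LinearIndependent K (fun (j : Fin N) (z : Z) => v z ^ (j : ℕ)) := by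
  rw [Fintype.linearIndependent_iff]
  intro c hc
  let w : Fin N → Z := (Finite.equivFin Z).symm ∘ Fin.castLE hN
  have hw : Function.Injective w :=
    (Finite.equivFin Z).symm.injective.comp (Fin.castLE_injective hN)
  refine congrFun (Matrix.eq_zero_of_forall_index_sum_mul_pow_eq_zero (hv.comp hw) fun j => ?_)
  simpa using congrFun hc (w j)

theorem LinearIndependent.mul_of_fiberwise {ι κ X Z : Type*} [Fintype ι] [Fintype κ]
    (π : Z → X) {f : ι → X → K} {g : κ → Z → K} (hf : LinearIndependent K f)
    (hg : ∀ x, LinearIndependent K (fun (j : κ) (z : {z // π z = x}) => g j z)) :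
    LinearIndependent K (fun (e : ι × κ) (z : Z) => f e.1 (π z) * g e.2 z) := by
  rw [Fintype.linearIndependent_iff] at hf ⊢
  intro c hc
  have hcoeff : ∀ x j, ∑ i, c (i, j) * f i x = 0 := by
    intro x
    refine Fintype.linearIndependent_iff.1 (hg x) _ (funext fun ⟨z, hz⟩ => ?_)
    subst hz
    simpa [Fintype.sum_prod_type, Finset.sum_comm (γ := ι), Finset.sum_mul, mul_assoc]
      using congrFun hc z
  rintro ⟨i, j⟩
  exact hf (fun i => c (i, j)) (funext fun x => by simpa using hcoeff x j) i

theorem LinearIndependent.funLeft_of_surjective {κ Y Z : Type*} {g : κ → Y → K}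
    (hg : LinearIndependent K g) {φ : Z → Y} (hφ : Function.Surjective φ) :
    LinearIndependent K (fun j z => g j (φ z)) :=
  hg.map' (LinearMap.funLeft K K φ)
    (LinearMap.ker_eq_bot.2 (LinearMap.funLeft_injective_of_surjective K K φ hφ))

theorem LinearIndependent.pi_prod {ι X : Type*} [Fintype ι] {f : ι → X → K}
    (hf : LinearIndependent K f) (m : ℕ) :
    LinearIndependent K (fun (e : Fin m → ι) (z : Fin m → X) => ∏ k, f (e k) (z k)) := by
  induction m with
  | zero =>
    rw [linearIndependent_unique_iff]
    exact Function.ne_iff.2 ⟨default, by simp⟩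
  | succ m ih =>
    have hfib (x : X) : LinearIndependent K
        (fun (e : Fin m → ι) (z : {z : Fin (m + 1) → X // z 0 = x}) =>
          ∏ k, f (e k) (Fin.tail z.1 k)) :=
      ih.funLeft_of_surjective (φ := fun z : {z : Fin (m + 1) → X // z 0 = x} => Fin.tail z.1)
        fun w => ⟨⟨Fin.cons x w, Fin.cons_zero _ _⟩, Fin.tail_cons _ _⟩
    have hsplit := (hf.mul_of_fiberwise (fun z : Fin (m + 1) → X => z 0)
      (g := fun (e : Fin m → ι) z => ∏ k, f (e k) (Fin.tail z k)) hfib).comp _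
        (Fin.consEquiv fun _ => ι).symm.injective
    convert hsplit using 1
    ext e z
    simp [Fin.prod_univ_succ, Fin.consEquiv, Fin.tail]

end LinearIndependence

theorem card_filter_pow_eq_mul_le {K : Type*} [Field K] [Fintype K] [DecidableEq K] (a : K)
    {q : ℕ} (hq : 1 < q) : #{y : K | y ^ q = a * y} ≤ q := by
  have hdeg : (C a * X).natDegree < ((X : K[X]) ^ q).natDegree := by
    rw [natDegree_X_pow]
    exact ((natDegree_C_mul_le a X).trans natDegree_X_le).trans_lt hq
  have hne : (X : K[X]) ^ q - C a * X ≠ 0 := by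
    intro h
    rw [sub_eq_zero] at h
    simp [h] at hdeg
  calc #{y : K | y ^ q = a * y} ≤ ((X : K[X]) ^ q - C a * X).natDegree := by
        refine card_le_degree_of_subset_roots fun y hy => ?_
        rw [mem_roots hne]
        simp_all [sub_eq_zero]
    _ = q := by rw [natDegree_sub_eq_left_of_natDegree_lt hdeg, natDegree_X_pow]

theorem FiniteField.pow_pow_eq_self_of_card_eq_sq {K : Type*} [Field K] [Fintype K] {q : ℕ}
    (hcard : Fintype.card K = q ^ 2) (x : K) : (x ^ q) ^ q = x := by
  rw [← pow_mul, ← sq, ← hcard, FiniteField.pow_card]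

theorem AddMonoidHom.card_fiber_eq_of_card_eq_sq {G H : Type*} [AddGroup G] [Fintype G]
    [AddMonoid H] [DecidableEq H] {T : G →+ H} {S : Finset H} {q : ℕ} (hS : #S ≤ q)
    (hT : ∀ g, T g ∈ S) (hker : #{g | T g = 0} ≤ q) (hcard : Fintype.card G = q ^ 2) {t : H}
    (ht : t ∈ S) : #{g | T g = t} = q := by
  have hfib : ∀ s ∈ univ.image T, #{g | T g = s} = #{g | T g = 0} := fun s hs =>
    card_fiber_eq_of_mem_range T (by simpa using hs) ⟨0, map_zero T⟩
  have hsub : univ.image T ⊆ S := fun s hs => by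
    obtain ⟨g, -, rfl⟩ := mem_image.1 hs
    exact hT g
  have hprod : #(univ.image T) * #{g | T g = 0} = q * q := by
    rw [← sum_const_nat hfib, ← sq, ← hcard, ← card_univ, card_eq_sum_card_image T univ]
  have himage := (card_le_card hsub).trans hS
  have himage_eq : #(univ.image T) = q := by nlinarith
  have hker_eq : #{g | T g = 0} = q := by nlinarith
  have ht_mem : t ∈ univ.image T := by
    rwa [eq_of_subset_of_card_le hsub (by omega)]
  rw [hfib t ht_mem, hker_eq]

section Trace

variable (F : Type*) [Field F] (p : ℕ) [Fact p.Prime] [CharP F p] (n : ℕ)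

/-- `y ↦ y + y^q` for `q = p^n`: the trace to `F_q` when `|F| = q²`. -/
def relTrace : F →+ F := AddMonoidHom.id F + (iterateFrobenius F p n : F →+* F).toAddMonoidHom

variable {F p n}

@[simp]
theorem relTrace_apply (y : F) : relTrace F p n y = y + y ^ p ^ n := rfl

variable [Fintype F]

theorem card_ker_relTrace_le [DecidableEq F] (hn : n ≠ 0) :
    #{y : F | relTrace F p n y = 0} ≤ p ^ n := by
  calc _ ≤ #{y : F | y ^ p ^ n = -1 * y} := by
        apply card_le_card
        intro y hy
        rw [mem_filter] at hy ⊢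
        simp only [relTrace_apply] at hy
        exact ⟨mem_univ y, by linear_combination hy.2⟩
    _ ≤ p ^ n := card_filter_pow_eq_mul_le _ (Nat.one_lt_pow hn (Fact.out : p.Prime).one_lt)

theorem relTrace_pow_eq_self (hcard : Fintype.card F = (p ^ n) ^ 2) (y : F) :
    relTrace F p n y ^ p ^ n = relTrace F p n y := by
  simp [add_pow_char_pow, FiniteField.pow_pow_eq_self_of_card_eq_sq hcard, add_comm]

theorem card_fiber_relTrace [DecidableEq F] (hn : n ≠ 0) (hcard : Fintype.card F = (p ^ n) ^ 2)
    {t : F} (ht : t ^ p ^ n = t) : #{y : F | relTrace F p n y = t} = p ^ n := by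
  have hq : 1 < p ^ n := Nat.one_lt_pow hn (Fact.out : p.Prime).one_lt
  have hfix : #{t : F | t ^ p ^ n = t} ≤ p ^ n := by
    simpa using card_filter_pow_eq_mul_le (1 : F) hq
  exact AddMonoidHom.card_fiber_eq_of_card_eq_sq hfix
    (fun y => mem_filter.2 ⟨mem_univ _, relTrace_pow_eq_self hcard y⟩) (card_ker_relTrace_le hn)
    hcard (mem_filter.2 ⟨mem_univ t, ht⟩)

theorem Hsub.card_fiber_fst (hn : n ≠ 0) (hcard : Fintype.card F = (p ^ n) ^ 2) (x : F) :
    Nat.card {z : Hsub F (p ^ n) // z.1.1 = x} = p ^ n := by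
  classical
  let e : {z : Hsub F (p ^ n) // z.1.1 = x} ≃ {y : F // relTrace F p n y = x ^ (p ^ n + 1)} :=
    { toFun := fun z => ⟨z.1.1.2, by rw [relTrace_apply, ← z.1.2, z.2]⟩
      invFun := fun y => ⟨⟨(x, y), y.2.symm⟩, rfl⟩
      left_inv := by rintro ⟨⟨⟨x', y⟩, h⟩, rfl⟩; rfl
      right_inv := fun y => rfl }
  have hnorm : (x ^ (p ^ n + 1)) ^ p ^ n = x ^ (p ^ n + 1) := by
    rw [pow_succ, mul_pow, FiniteField.pow_pow_eq_self_of_card_eq_sq hcard, mul_comm]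
  rw [Nat.card_congr e, Nat.card_eq_fintype_card, Fintype.card_subtype]
  exact card_fiber_relTrace hn hcard hnorm

theorem Hsub.card (hn : n ≠ 0) (hcard : Fintype.card F = (p ^ n) ^ 2) :
    Nat.card (Hsub F (p ^ n)) = (p ^ n) ^ 3 := by
  rw [← Nat.card_congr (Equiv.sigmaFiberEquiv fun z : Hsub F (p ^ n) => z.1.1), Nat.card_sigma]
  simp only [Hsub.card_fiber_fst hn hcard, sum_const, card_univ, hcard, smul_eq_mul]
  ring

theorem Hsub.linearIndependent_monomials (hn : n ≠ 0) (hcard : Fintype.card F = (p ^ n) ^ 2) :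
    LinearIndependent F (fun (e : Fin ((p ^ n) ^ 2) × Fin (p ^ n)) (z : Hsub F (p ^ n)) =>
      z.1.1 ^ (e.1 : ℕ) * z.1.2 ^ (e.2 : ℕ)) := by
  refine LinearIndependent.mul_of_fiberwise (fun z => z.1.1)
    (f := fun (i : Fin ((p ^ n) ^ 2)) (x : F) => x ^ (i : ℕ))
    (g := fun (j : Fin (p ^ n)) (z : Hsub F (p ^ n)) => z.1.2 ^ (j : ℕ))
    (linearIndependent_pow_of_injective (v := id) Function.injective_id
      (by rw [Nat.card_eq_fintype_card, hcard])) fun x => ?_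
  refine linearIndependent_pow_of_injective
    (v := fun z : {z : Hsub F (p ^ n) // z.1.1 = x} => z.1.1.2) (fun z w h => ?_)
    (Hsub.card_fiber_fst hn hcard x).ge
  exact Subtype.ext (Subtype.ext (Prod.ext (z.2.trans w.2.symm) h))

end Trace

theorem hermitian_monomials_basis_general {F : Type*} [Field F] [Fintype F]
    (q : ℕ) (hq : ∃ p n : ℕ, p.Prime ∧ 0 < n ∧ q = p ^ n)
    (hcard : Fintype.card F = q ^ 2)
    (m : ℕ) :
    LinearIndependent F (fun (e : Fin m → Fin (q ^ 2) × Fin q) =>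
      fun p : Fin m → Hsub F q =>
        ∏ k, (p k).1.1 ^ (((e k).1 : ℕ)) * (p k).1.2 ^ (((e k).2 : ℕ))) ∧
    Submodule.span F (Set.range (fun (e : Fin m → Fin (q ^ 2) × Fin q) =>
      fun p : Fin m → Hsub F q =>
        ∏ k, (p k).1.1 ^ (((e k).1 : ℕ)) * (p k).1.2 ^ (((e k).2 : ℕ)))) = ⊤ := by
  classical
  obtain ⟨p, n, hp, hn, rfl⟩ := hq
  have : Fact p.Prime := ⟨hp⟩
  have : CharP F p := charP_of_card_eq_prime_pow (f := n * 2) (by rw [hcard, pow_mul])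
  have hli := (Hsub.linearIndependent_monomials hn.ne' hcard).pi_prod m
  refine ⟨hli, hli.span_eq_top_of_card_eq_finrank' ?_⟩
  rw [Module.finrank_fintype_fun_eq_card, Fintype.card_fun, Fintype.card_fun, Fintype.card_prod,
    Fintype.card_fin, Fintype.card_fin, Fintype.card_eq_nat_card (α := Hsub F (p ^ n)),
    Hsub.card hn.ne' hcard]
  ring

/-- The `q^(3m)` monomial functions `H^m → F`,
`(x₁,y₁,…,x_m,y_m) ↦ ∏ₖ x_k^(i_k) y_k^(j_k)` with `i_k < q²` and `j_k < q`, are linearly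
independent over `F`, and they span the space of all functions `H^m → F` (hence form a
basis, since `|H^m| = q^(3m)`). -/
theorem hermitian_monomials_basis {F : Type*} [Field F] [Fintype F] [DecidableEq F]
    (q : ℕ) (hq : ∃ p n : ℕ, p.Prime ∧ 0 < n ∧ q = p ^ n)
    (hcard : Fintype.card F = q ^ 2)
    (m : ℕ) (hm : 1 ≤ m) :
    LinearIndependent F (fun (e : Fin m → Fin (q ^ 2) × Fin q) =>
      fun p : Fin m → Hsub F q =>
        ∏ k, (p k).1.1 ^ (((e k).1 : ℕ)) * (p k).1.2 ^ (((e k).2 : ℕ))) ∧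
    Submodule.span F (Set.range (fun (e : Fin m → Fin (q ^ 2) × Fin q) =>
      fun p : Fin m → Hsub F q =>
        ∏ k, (p k).1.1 ^ (((e k).1 : ℕ)) * (p k).1.2 ^ (((e k).2 : ℕ)))) = ⊤ :=
  hermitian_monomials_basis_general q hq hcard m
end

section
/- Let m ≥ 1, let ℓ be a positive integer and q = 2^ℓ, let b = 2 + ⌈log₂ m⌉, let c be a positive integer with ℓ − c > ⌈log₂ m⌉, and let r = (1 − 2^{−c})q³. For a ∈ ℕ write a = Σ_{i≥0} a_i 2^i with a_i ∈ {0,1}. Define Good to be the set of tuples (i_1,…,i_m,j_1,…,j_m) ∈ ℕ^{2m} with i_k < q² and j_k < q for all k, such that there exists s ∈ [2ℓ−c, 2ℓ−b−1] with (i_k)_{s+t} = (j_k)_{s+t} = 0 for all t ∈ {0,1,…,b} and all k ∈ [m]. Then for every (i_1,…,i_m,j_1,…,j_m) ∈ Good, the monomial function H^m → F_{q²}, (x_1,y_1,…,x_m,y_m) ↦ ∏_{k=1}^m x_k^{i_k} y_k^{j_k}, belongs to lift_{Φ_H}^m(Herm_q[r]). -/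
/-- The maps `σ_{a,b,c}` viewed as maps of the Hermitian curve `H` to itself. -/
def PhiHsub (F : Type*) [Field F] (q : ℕ) : Set (Hsub F q → Hsub F q) :=
  {τ | ∃ a b c : F, a ≠ 0 ∧ (b, c) ∈ Hset F q ∧
    ∀ p : Hsub F q, (τ p : F × F) = sigmaMap q a b c (p : F × F)}

/-- Restriction of `f : Dᵐ → R` along a tuple of maps `D → D`. -/
def restr {D R : Type*} {m : ℕ} (f : (Fin m → D) → R) (σ : Fin m → D → D) : D → R :=
  fun z => f fun i => σ i z

/-- The `m`-dimensional `Φ`-lift of a code `C ⊆ (D → R)`. -/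
def liftCode {D R : Type*} (Φ : Set (D → D)) (m : ℕ) (C : Set (D → R)) :
    Set ((Fin m → D) → R) :=
  {f | ∀ σ : Fin m → D → D, (∀ i, σ i ∈ Φ) → restr f σ ∈ C}

open Submodule Pointwise

lemma Nat.testBit_eq_false_of_not_two_dvd_choose {n k t : ℕ} (h : ¬ 2 ∣ n.choose k)
    (hn : n.testBit t = false) : k.testBit t = false := by
  have lucas : ∀ {n k : ℕ}, ¬ 2 ∣ n.choose k →
      ¬ 2 ∣ (n % 2).choose (k % 2) ∧ ¬ 2 ∣ (n / 2).choose (k / 2) := fun h => by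
    rwa [(Choose.choose_modEq_choose_mod_mul_choose_div_nat (p := 2)).dvd_iff (dvd_refl 2),
      Nat.prime_two.dvd_mul, not_or] at h
  induction t generalizing n k with
  | zero =>
    simp only [Nat.testBit_zero, decide_eq_false_iff_not] at hn ⊢
    intro hk
    apply (lucas h).1
    rw [show n % 2 = 0 by omega, hk]
    simp
  | succ t ih =>
    rw [Nat.testBit_succ] at hn ⊢
    exact ih (lucas h).2 hn

lemma Nat.mod_two_pow_lt_of_testBit_eq_false {e s b : ℕ}
    (h : ∀ t ≤ b, e.testBit (s + t) = false) : e % 2 ^ (s + b + 1) < 2 ^ s :=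
  Nat.lt_pow_two_of_testBit _ fun i hi => by
    rw [Nat.testBit_mod_two_pow]
    by_cases hib : i < s + b + 1
    · obtain ⟨t, rfl⟩ := Nat.exists_eq_add_of_le hi
      simp [h t (by omega)]
    · simp [hib]

lemma charP_two_of_card_eq_two_pow {F : Type*} [Field F] [Fintype F] {n : ℕ}
    (h : Fintype.card F = 2 ^ n) : CharP F 2 := by
  obtain ⟨p, hchar, k, hp, hk⟩ := FiniteField.card' F
  have hp2 : p ∣ 2 := hp.dvd_of_dvd_pow (h ▸ hk ▸ dvd_pow_self p k.ne_zero)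
  rwa [(Nat.prime_dvd_prime_iff_eq hp Nat.prime_two).mp hp2] at hchar

lemma pow_mul_add_eq_of_pow_eq_self {M : Type*} [Monoid M] {x : M} {n : ℕ} (hx : x ^ n = x)
    (Q R : ℕ) : x ^ (n * Q + R) = x ^ (Q + R) := by
  induction Q generalizing R with
  | zero => simp
  | succ Q ih =>
    rw [show n * (Q + 1) + R = n * Q + R + n by ring, pow_add, hx, ← pow_succ, add_assoc, ih]
    ring_nf

section Monomials

variable (F : Type*) {A : Type*} [Field F] [CommRing A] [Algebra F A] (X Y : A)

def monomialSpan (S : Set (ℕ × ℕ)) : Submodule F A :=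
  span F ((fun d => X ^ d.1 * Y ^ d.2) '' S)

variable {F X Y}

lemma monomial_mem_monomialSpan {S : Set (ℕ × ℕ)} {d : ℕ × ℕ} (hd : d ∈ S) :
    X ^ d.1 * Y ^ d.2 ∈ monomialSpan F X Y S :=
  subset_span ⟨d, hd, rfl⟩

lemma monomialSpan_mono {S T : Set (ℕ × ℕ)} (h : S ⊆ T) :
    monomialSpan F X Y S ≤ monomialSpan F X Y T :=
  span_mono (Set.image_mono h)

lemma mul_mem_monomialSpan {S T : Set (ℕ × ℕ)} {f g : A} (hf : f ∈ monomialSpan F X Y S)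
    (hg : g ∈ monomialSpan F X Y T) : f * g ∈ monomialSpan F X Y (S + T) := by
  have hfg := mul_mem_mul hf hg
  unfold monomialSpan at hfg ⊢
  rw [span_mul_span] at hfg
  refine span_mono (fun x hx => ?_) hfg
  obtain ⟨_, ⟨d, hd, rfl⟩, _, ⟨e, he, rfl⟩, rfl⟩ := hx
  refine ⟨d + e, Set.add_mem_add hd he, ?_⟩
  simp only [Prod.fst_add, Prod.snd_add, pow_add]
  ring

lemma prod_mem_monomialSpan {ι : Type*} (s : Finset ι) (f : ι → A)
    (S : ℕ → Set (ℕ × ℕ)) (h0 : (0, 0) ∈ S 0) (hS : ∀ n, S n + S 1 ⊆ S (n + 1))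
    (hf : ∀ k ∈ s, f k ∈ monomialSpan F X Y (S 1)) {n : ℕ} (hn : s.card = n) :
    ∏ k ∈ s, f k ∈ monomialSpan F X Y (S n) := by
  subst hn
  induction s using Finset.cons_induction with
  | empty => simpa using monomial_mem_monomialSpan (X := X) (Y := Y) h0
  | cons a s ha ih =>
    rw [Finset.prod_cons, Finset.card_cons, mul_comm]
    exact monomialSpan_mono (hS _) (mul_mem_monomialSpan
      (ih fun k hk => hf k (Finset.mem_cons_of_mem hk)) (hf a (Finset.mem_cons_self a s)))

lemma linear_pow_mem_monomialSpan (a b : F) (i : ℕ) :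
    (a • X + algebraMap F A b) ^ i ∈
      monomialSpan F X Y {d | d.1 ≤ i ∧ (i.choose d.1 : F) ≠ 0 ∧ d.2 = 0} := by
  rw [add_pow]
  refine sum_mem fun e he => ?_
  by_cases hc : (i.choose e : F) = 0
  · rw [← map_natCast (algebraMap F A), hc, map_zero, mul_zero]
    exact zero_mem _
  · have hmem : X ^ e * Y ^ 0 ∈
        monomialSpan F X Y {d : ℕ × ℕ | d.1 ≤ i ∧ (i.choose d.1 : F) ≠ 0 ∧ d.2 = 0} :=
      monomial_mem_monomialSpan (d := (e, 0))
        ⟨Nat.lt_succ_iff.mp (Finset.mem_range.mp he), hc, rfl⟩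
    convert smul_mem _ (a ^ e * b ^ (i - e) * i.choose e) hmem using 1
    simp only [Algebra.smul_def, map_mul, map_pow, map_natCast, pow_zero, mul_one]
    ring

lemma affine_pow_mem_monomialSpan (a b c : F) (j : ℕ) :
    (a • Y + b • X + algebraMap F A c) ^ j ∈ monomialSpan F X Y (Set.Iic (j, j)) := by
  have hbase : a • Y + b • X + algebraMap F A c ∈ monomialSpan F X Y (Set.Iic (1, 1)) := by
    refine add_mem (add_mem ?_ ?_) ?_
    · simpa using smul_mem _ a (monomial_mem_monomialSpan (X := X) (Y := Y) (d := (0, 1))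
        (by simp [Prod.le_def]))
    · simpa using smul_mem _ b (monomial_mem_monomialSpan (X := X) (Y := Y) (d := (1, 0))
        (by simp [Prod.le_def]))
    · simpa [Algebra.algebraMap_eq_smul_one] using
        smul_mem _ c (monomial_mem_monomialSpan (X := X) (Y := Y) (d := (0, 0)) (by simp))
  simpa using prod_mem_monomialSpan (Finset.range j) (fun _ => _) (fun n => Set.Iic (n, n))
    (Set.mem_Iic.mpr le_rfl) (fun n => by
      rintro _ ⟨d, hd, e, he, rfl⟩
      exact Set.mem_Iic.mpr (add_le_add (Set.mem_Iic.mp hd) (Set.mem_Iic.mp he)))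
    (fun _ _ => hbase) (Finset.card_range j)

end Monomials

-- Contains the exponents of every product of `n` monomials `x^(L₀ + B P₀) y^v₀` with
-- `L₀ ≤ α`, `P₀ ≤ β` and `v₀ ≤ γ`.
def splitExponents (B α β γ n : ℕ) : Set (ℕ × ℕ) :=
  {d | ∃ L P, d.1 = L + B * P ∧ L ≤ n * α ∧ P ≤ n * β ∧ d.2 ≤ n * γ}

lemma zero_mem_splitExponents (B α β γ : ℕ) : (0, 0) ∈ splitExponents B α β γ 0 :=
  ⟨0, 0, by simp⟩

lemma splitExponents_add_subset (B α β γ n : ℕ) :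
    splitExponents B α β γ n + splitExponents B α β γ 1 ⊆
      splitExponents B α β γ (n + 1) := by
  rintro _ ⟨d, ⟨L, P, hd, hL, hP, hv⟩, e, ⟨L', P', he, hL', hP', hv'⟩, rfl⟩
  rw [one_mul] at hL' hP' hv'
  refine ⟨L + L', P + P', ?_, ?_, ?_, ?_⟩
  · rw [Prod.fst_add, hd, he]; ring
  all_goals rw [add_one_mul]
  · exact add_le_add hL hL'
  · exact add_le_add hP hP'
  · exact add_le_add hv hv'

def hermExponents (q r : ℕ) : Set (ℕ × ℕ) :=
  {d | d.2 < q ∧ q * d.1 + (q + 1) * d.2 < r}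

lemma hermitian_weight_lt {ℓ s b c m L Q t P v : ℕ} (hb : 2 ≤ b) (hm : m ≤ 2 ^ (b - 2))
    (hc : c ≤ ℓ) (hs : 2 * ℓ - c ≤ s) (hsb : s + b < 2 * ℓ)
    (hL : L ≤ m * (2 ^ s + 2 ^ ℓ))
    (hQ : Q ≤ m) (ht : t ≤ m) (hP : P < 2 ^ (2 * ℓ - (s + b + 1))) (hv : v < 2 ^ ℓ) :
    2 ^ ℓ * (Q + L + (2 ^ ℓ + 1) * t + 2 ^ (s + b + 1) * P) + (2 ^ ℓ + 1) * v
      < 2 ^ (3 * ℓ) - 2 ^ (3 * ℓ - c) := by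
  set q := 2 ^ ℓ
  set S := 2 ^ s
  set M := 2 ^ (b - 2)
  set K := 2 ^ (2 * ℓ - (s + b + 1))
  set G := 2 ^ (3 * ℓ - c)
  have hB : 2 ^ (s + b + 1) = 8 * M * S := by
    rw [show s + b + 1 = 3 + (b - 2) + s by omega, pow_add, pow_add]; rfl
  have hq2 : q * q = 8 * M * S * K := by
    rw [← hB, ← pow_add, ← pow_add]; congr 1; omega
  have hq3 : 2 ^ (3 * ℓ) = q * q * q := by rw [← pow_add, ← pow_add]; congr 1; omega
  have hqS : q ≤ S := Nat.pow_le_pow_right two_pos (by omega)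
  have hq : 2 ≤ q := le_self_pow₀ one_le_two (by omega)
  have hGq : q * q ≤ G := by rw [← pow_add]; exact Nat.pow_le_pow_right two_pos (by omega)
  have hGM : G ≤ q * M * S := by
    rw [← pow_add, ← pow_add]; exact Nat.pow_le_pow_right two_pos (by omega)
  -- the reduced `x`-exponent is at most `q² - 4MS`, leaving room `4qMS ≥ 4G` in the weight
  have hx : Q + L + (q + 1) * t + 8 * M * S * P + 4 * M * S ≤ q * q := by
    have hlow : Q + L + (q + 1) * t ≤ M * (4 * S) :=
      calc Q + L + (q + 1) * t ≤ m * (S + 2 * q + 2) := by nlinarith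
        _ ≤ M * (4 * S) := Nat.mul_le_mul hm (by omega)
    have hhigh : 8 * M * S * (P + 1) ≤ 8 * M * S * K := Nat.mul_le_mul_left _ hP
    nlinarith
  have hy : (q + 1) * v < q * q := by nlinarith
  have hxq : q * (Q + L + (q + 1) * t + 8 * M * S * P) + 4 * G ≤ q * q * q := by nlinarith
  rw [hB, hq3]
  omega

section Reduction

variable {F : Type*} {A : Type*} [Field F] [CommRing A] [Algebra F A] {X Y : A}

lemma monomial_mem_of_reduced_mem {C : Submodule F A} {q : ℕ} (hq : 2 ≤ q)
    (hY : Y ^ q = X ^ (q + 1) + Y) (u v : ℕ)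
    (h : ∀ t w, w < q → w + q * t ≤ v → X ^ (u + (q + 1) * t) * Y ^ w ∈ C) :
    X ^ u * Y ^ v ∈ C := by
  induction v using Nat.strong_induction_on generalizing u with
  | _ v ih =>
  rcases lt_or_ge v q with hv | hv
  · simpa using h 0 v hv (by simp)
  · obtain ⟨w, rfl⟩ := Nat.exists_eq_add_of_le' hv
    have hsplit : X ^ u * Y ^ (w + q) = X ^ (u + (q + 1)) * Y ^ w + X ^ u * Y ^ (w + 1) := by
      rw [pow_add Y, hY]; ring
    rw [hsplit]
    refine add_mem (ih w (by omega) _ fun t w' hw' hwt => ?_)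
      (ih (w + 1) (by omega) u fun t w' hw' hwt => h t w' hw' (by omega))
    convert h (t + 1) w' hw' (by linarith) using 3
    ring

end Reduction

section Hermitian

variable {F : Type*} {A : Type*} [Field F] [CommRing A] [Algebra F A] {X Y : A}
  {ℓ s b : ℕ}

lemma monomialSpan_splitExponents_le {c m : ℕ} (hX : X ^ (2 ^ ℓ) ^ 2 = X)
    (hY : Y ^ 2 ^ ℓ = X ^ (2 ^ ℓ + 1) + Y) (hb : 2 ≤ b) (hm : m ≤ 2 ^ (b - 2))
    (hc : c ≤ ℓ) (hs : 2 * ℓ - c ≤ s) (hsb : s + b < 2 * ℓ) :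
    monomialSpan F X Y (splitExponents (2 ^ (s + b + 1)) (2 ^ s + 2 ^ ℓ)
        (2 ^ (2 * ℓ - (s + b + 1))) (2 ^ ℓ) m)
      ≤ monomialSpan F X Y (hermExponents (2 ^ ℓ) (2 ^ (3 * ℓ) - 2 ^ (3 * ℓ - c))) := by
  refine span_le.mpr ?_
  rintro _ ⟨d, ⟨L, P, hd, hL, hP, hv⟩, rfl⟩
  set K := 2 ^ (2 * ℓ - (s + b + 1)) with hK
  have hq : 2 ≤ 2 ^ ℓ := le_self_pow₀ one_le_two (by omega)
  refine monomial_mem_of_reduced_mem hq hY d.1 d.2 fun t w hw hwt => ?_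
  -- `x^(q²) = x` removes `P / K` full copies of `q² = 2^(s+b+1) K` from the `x`-exponent
  have hsplit : d.1 + (2 ^ ℓ + 1) * t
      = (2 ^ ℓ) ^ 2 * (P / K) + (L + (2 ^ ℓ + 1) * t + 2 ^ (s + b + 1) * (P % K)) := by
    have hBK : 2 ^ (s + b + 1) * K = (2 ^ ℓ) ^ 2 := by
      rw [← pow_add, ← pow_mul]; congr 1; omega
    rw [hd, ← hBK]
    conv_lhs => rw [← Nat.div_add_mod P K]
    ring
  rw [hsplit, pow_mul_add_eq_of_pow_eq_self hX]
  refine monomial_mem_monomialSpan (d := (_, w)) ⟨hw, ?_⟩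
  have hQ : P / K ≤ m := Nat.div_le_of_le_mul (mul_comm m K ▸ hP)
  have ht : t ≤ m := by
    by_contra! ht
    nlinarith
  have hweight :=
    hermitian_weight_lt hb hm hc hs hsb hL hQ ht (Nat.mod_lt P (by positivity)) hw
  rw [← hK] at hweight
  exact lt_of_eq_of_lt (by ring) hweight

variable [CharP F 2]

lemma factor_mem_monomialSpan_splitExponents {i j : ℕ} (hi : i < (2 ^ ℓ) ^ 2)
    (hj : j ≤ 2 ^ ℓ) (hsb : s + b < 2 * ℓ) (hwin : ∀ t ≤ b, i.testBit (s + t) = false)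
    (a₁ b₁ a₂ b₂ c₂ : F) :
    (a₁ • X + algebraMap F A b₁) ^ i * (a₂ • Y + b₂ • X + algebraMap F A c₂) ^ j ∈
      monomialSpan F X Y (splitExponents (2 ^ (s + b + 1)) (2 ^ s + 2 ^ ℓ)
        (2 ^ (2 * ℓ - (s + b + 1))) (2 ^ ℓ) 1) := by
  refine monomialSpan_mono ?_ (mul_mem_monomialSpan (linear_pow_mem_monomialSpan a₁ b₁ i)
    (affine_pow_mem_monomialSpan a₂ b₂ c₂ j))
  rintro _ ⟨⟨e, _⟩, ⟨hei, hchoose, rfl⟩, ⟨g, h⟩, hgh, rfl⟩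
  obtain ⟨hg, hh⟩ := Prod.mk_le_mk.mp hgh
  have hodd : ¬ 2 ∣ i.choose e := by rwa [Ne, CharP.cast_eq_zero_iff F 2] at hchoose
  have hlow : e % 2 ^ (s + b + 1) < 2 ^ s := Nat.mod_two_pow_lt_of_testBit_eq_false
    fun t ht => Nat.testBit_eq_false_of_not_two_dvd_choose hodd (hwin t ht)
  have hhigh : e / 2 ^ (s + b + 1) < 2 ^ (2 * ℓ - (s + b + 1)) := by
    rw [Nat.div_lt_iff_lt_mul (by positivity), ← pow_add,
      show 2 * ℓ - (s + b + 1) + (s + b + 1) = ℓ * 2 by omega, pow_mul]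
    omega
  refine ⟨e % 2 ^ (s + b + 1) + g, e / 2 ^ (s + b + 1), ?_, ?_, ?_, ?_⟩
  · simp only [Prod.fst_add]
    have := Nat.mod_add_div e (2 ^ (s + b + 1))
    omega
  · omega
  · omega
  · simp only [Prod.snd_add]
    omega

end Hermitian

section Curve

variable (F : Type*) [Field F] (q : ℕ)

def hermX : Hsub F q → F := fun p => p.1.1

def hermY : Hsub F q → F := fun p => p.1.2

variable {F q}

lemma hermCode_eq_monomialSpan (r : ℕ) :
    HermCode F q r = monomialSpan F (hermX F q) (hermY F q) (hermExponents q r) := by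
  unfold HermCode monomialSpan
  congr 1
  ext f
  constructor
  · rintro ⟨i, j, hj, hr, rfl⟩
    exact ⟨(i, j), ⟨hj, hr⟩, rfl⟩
  · rintro ⟨⟨i, j⟩, ⟨hj, hr⟩, rfl⟩
    exact ⟨i, j, hj, hr, rfl⟩

lemma hermX_pow_card [Fintype F] (hcard : Fintype.card F = q ^ 2) :
    hermX F q ^ q ^ 2 = hermX F q :=
  funext fun p => hcard ▸ FiniteField.pow_card p.1.1

lemma hermY_pow [CharP F 2] : hermY F q ^ q = hermX F q ^ (q + 1) + hermY F q :=
  funext fun p => by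
    change p.1.2 ^ q = p.1.1 ^ (q + 1) + p.1.2
    linear_combination -p.2 - p.1.2 * CharTwo.two_eq_zero (R := F)

lemma restr_monomial_eq_prod {m : ℕ} {i j : Fin m → ℕ} {σ : Fin m → Hsub F q → Hsub F q}
    {a β γ : Fin m → F} (hσ : ∀ k p, (σ k p : F × F) = sigmaMap q (a k) (β k) (γ k) p) :
    restr (fun p : Fin m → Hsub F q => ∏ k, (p k).1.1 ^ i k * (p k).1.2 ^ j k) σ =
      ∏ k, (a k • hermX F q + algebraMap F _ (β k)) ^ i k *
        (a k ^ (q + 1) • hermY F q + (a k * β k ^ q) • hermX F q +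
          algebraMap F _ (γ k)) ^ j k := by
  funext p
  simp [restr, hσ, sigmaMap, hermX, hermY]

end Curve

theorem good_monomials_in_lift_general {F : Type*} [Field F] [Fintype F]
    (m ℓ c q b r : ℕ)
    (hq : q = 2 ^ ℓ) (hb : b = 2 + Nat.clog 2 m)
    (hlc : Nat.clog 2 m + c < ℓ)
    (hr : r = 2 ^ (3 * ℓ) - 2 ^ (3 * ℓ - c))
    (hcard : Fintype.card F = q ^ 2)
    (i j : Fin m → ℕ) (hi : ∀ k, i k < q ^ 2) (hj : ∀ k, j k < q)
    (hgood : ∃ s : ℕ, 2 * ℓ - c ≤ s ∧ s + b < 2 * ℓ ∧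
      ∀ t ≤ b, ∀ k, Nat.testBit (i k) (s + t) = false ∧
        Nat.testBit (j k) (s + t) = false) :
    (fun p : Fin m → Hsub F q => ∏ k, (p k).1.1 ^ i k * (p k).1.2 ^ j k)
      ∈ liftCode (PhiHsub F q) m (HermCode F q r : Set (Hsub F q → F)) := by
  obtain ⟨s, hs, hsb, hwin⟩ := hgood
  subst hq hr
  have : CharP F 2 := charP_two_of_card_eq_two_pow (hcard.trans (pow_mul 2 ℓ 2).symm)
  have hm : m ≤ 2 ^ (b - 2) := by
    rw [hb, Nat.add_sub_cancel_left]
    exact Nat.le_pow_clog one_lt_two m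
  intro σ hσ
  choose a β γ _ _ hσ using hσ
  rw [restr_monomial_eq_prod hσ, SetLike.mem_coe, hermCode_eq_monomialSpan]
  refine monomialSpan_splitExponents_le (hermX_pow_card hcard) hermY_pow (by omega) hm (by omega)
    hs hsb ?_
  exact prod_mem_monomialSpan Finset.univ _ _ (zero_mem_splitExponents ..)
    (splitExponents_add_subset _ _ _ _)
    (fun k _ => factor_mem_monomialSpan_splitExponents (hi k) (hj k).le hsb
      (fun t ht => (hwin t ht k).1) _ _ _ _ _)
    (Finset.card_fin m)

/-- Good monomials lie in the lifted Hermitian code. Let `q = 2^ℓ`,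
`b = 2 + ⌈log₂ m⌉`, `ℓ − c > ⌈log₂ m⌉`, and `r = (1 − 2^(−c))·q³ = 2^(3ℓ) − 2^(3ℓ−c)`.
If the exponent tuple `(i₁,…,i_m,j₁,…,j_m)` (with `i_k < q²`, `j_k < q`) has some
`s ∈ [2ℓ−c, 2ℓ−b−1]` such that the binary digits of every `i_k` and `j_k` vanish at all
positions `s, s+1, …, s+b`, then the monomial `∏ₖ x_k^(i_k) y_k^(j_k)` belongs to
`lift_{Φ_H}^m(Herm_q[r])`. -/
theorem good_monomials_in_lift {F : Type*} [Field F] [Fintype F] [DecidableEq F]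
    (m ℓ c q b r : ℕ) [NeZero m] (hl : 0 < ℓ) (hc : 0 < c)
    (hq : q = 2 ^ ℓ) (hb : b = 2 + Nat.clog 2 m)
    (hlc : Nat.clog 2 m + c < ℓ)
    (hr : r = 2 ^ (3 * ℓ) - 2 ^ (3 * ℓ - c))
    (hcard : Fintype.card F = q ^ 2)
    (i j : Fin m → ℕ) (hi : ∀ k, i k < q ^ 2) (hj : ∀ k, j k < q)
    (hgood : ∃ s : ℕ, 2 * ℓ - c ≤ s ∧ s + b < 2 * ℓ ∧
      ∀ t ≤ b, ∀ k, Nat.testBit (i k) (s + t) = false ∧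
        Nat.testBit (j k) (s + t) = false) :
    (fun p : Fin m → Hsub F q => ∏ k, (p k).1.1 ^ i k * (p k).1.2 ^ j k)
      ∈ liftCode (PhiHsub F q) m (HermCode F q r : Set (Hsub F q → F)) :=
  good_monomials_in_lift_general m ℓ c q b r hq hb hlc hr hcard i j hi hj hgood
end

section
/- Let m ≥ 1, let ℓ be a positive integer and q = 2^ℓ, let b = 2 + ⌈log₂ m⌉, and let c be a positive integer with ℓ − c > ⌈log₂ m⌉. Define Good as the set of tuples (i_1,…,i_m,j_1,…,j_m) ∈ ℕ^{2m} with i_k < q², j_k < q, such that there exists s ∈ [2ℓ−c, 2ℓ−b−1] with binary digits (i_k)_{s+t} = (j_k)_{s+t} = 0 for all t ∈ {0,…,b} and all k. Then |Good| ≥ q^{3m}·(1 − (1 − 2^{−m(b+1)})^{⌊c/(b+1)⌋}). -/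
/-- Size of the set of good exponent tuples: with `q = 2^ℓ`, `b = 2 + ⌈log₂ m⌉`, and
`ℓ − c > ⌈log₂ m⌉`, the set `Good` of tuples `(i₁,…,i_m,j₁,…,j_m)` with `i_k < q²`,
`j_k < q`, admitting some `s ∈ [2ℓ−c, 2ℓ−b−1]` at which a window of `b+1` binary digits
of all the `i_k, j_k` vanishes, has size at least
`q^(3m) · (1 − (1 − 2^(−m(b+1)))^⌊c/(b+1)⌋)`. -/
theorem good_count (m ℓ c q b : ℕ) (hm : 1 ≤ m) (hl : 0 < ℓ) (hc : 0 < c)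
    (hq : q = 2 ^ ℓ) (hb : b = 2 + Nat.clog 2 m)
    (hlc : Nat.clog 2 m + c < ℓ) :
    (q : ℝ) ^ (3 * m) * (1 - (1 - ((2 : ℝ) ^ (m * (b + 1)))⁻¹) ^ (c / (b + 1))) ≤
      (Set.ncard {v : Fin m → ℕ × ℕ |
        (∀ k, (v k).1 < q ^ 2 ∧ (v k).2 < q) ∧
        ∃ s : ℕ, 2 * ℓ - c ≤ s ∧ s + b < 2 * ℓ ∧
          ∀ t ≤ b, ∀ k, Nat.testBit (v k).1 (s + t) = false ∧
            Nat.testBit (v k).2 (s + t) = false} : ℝ) := by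
  classical
  set n := 2 * ℓ with hn
  set M := m * (b + 1) with hM
  set r := c / (b + 1) with hr
  set N := 3 * ℓ * m with hN
  have hcl : c < ℓ := by omega
  have hrc : r * (b + 1) ≤ c := Nat.div_mul_le_self c (b + 1)
  have hrM : r * M = m * (r * (b + 1)) := by rw [hM]; ring
  have hrMN : r * M ≤ N := by
    rw [hrM, hN]
    calc m * (r * (b + 1)) ≤ m * ℓ := Nat.mul_le_mul_left m (by omega)
    _ ≤ 3 * ℓ * m := by nlinarith
  set sw : ℕ → ℕ := fun u => n - (u + 1) * (b + 1) with hsw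
  have hswf : ∀ u < r, n - c ≤ sw u ∧ sw u + b < n ∧ ℓ ≤ sw u := by
    intro u hu
    have h1 : (u + 1) * (b + 1) ≤ r * (b + 1) := Nat.mul_le_mul_right _ (by omega)
    have h2 : 1 * (b + 1) ≤ (u + 1) * (b + 1) := Nat.mul_le_mul_right _ (by omega)
    simp only [hsw]; omega
  have hjbit : ∀ j : ℕ, j < q → ∀ p, ℓ ≤ p → j.testBit p = false := by
    intro j hj p hp
    exact Nat.testBit_lt_two_pow (lt_of_lt_of_le (hq ▸ hj) (Nat.pow_le_pow_right (by norm_num) hp))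
  have hq2 : q ^ 2 = 2 ^ n := by rw [hq, ← pow_mul, hn, Nat.mul_comm]
  set P : (Fin m → ℕ × ℕ) → Prop := fun v =>
    ∃ s : ℕ, n - c ≤ s ∧ s + b < n ∧
      ∀ t ≤ b, ∀ k, Nat.testBit (v k).1 (s + t) = false ∧
        Nat.testBit (v k).2 (s + t) = false with hP
  set Full : Finset (Fin m → ℕ × ℕ) :=
    Fintype.piFinset fun _ => Finset.range (q ^ 2) ×ˢ Finset.range q with hFull
  have hSet : {v : Fin m → ℕ × ℕ |
        (∀ k, (v k).1 < q ^ 2 ∧ (v k).2 < q) ∧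
        ∃ s : ℕ, 2 * ℓ - c ≤ s ∧ s + b < 2 * ℓ ∧
          ∀ t ≤ b, ∀ k, Nat.testBit (v k).1 (s + t) = false ∧
            Nat.testBit (v k).2 (s + t) = false} = ↑(Full.filter P) := by
    ext v
    simp only [Set.mem_setOf_eq, Finset.coe_filter, Set.mem_setOf_eq, hP]
    constructor
    · rintro ⟨h1, h2⟩
      refine ⟨?_, h2⟩
      rw [hFull, Fintype.mem_piFinset]
      intro k
      simp only [Finset.mem_product, Finset.mem_range]
      exact h1 k
    · rintro ⟨h1, h2⟩
      rw [hFull, Fintype.mem_piFinset] at h1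
      refine ⟨fun k => ?_, h2⟩
      have := h1 k
      simpa only [Finset.mem_product, Finset.mem_range] using this
  rw [hSet, Set.ncard_coe_finset]
  have hFullCard : Full.card = 2 ^ N := by
    rw [hFull, Fintype.card_piFinset]
    simp only [Finset.card_product, Finset.card_range]
    rw [Finset.prod_const, Finset.card_univ, Fintype.card_fin, hq2, hq, ← pow_add,
      ← pow_mul, hN, hn]
    ring_nf
  set free : ℕ → Prop := fun x => ∀ u < r, x < sw u ∨ sw u + b < x with hfree
  set enc : (Fin m → ℕ × ℕ) →
      (Fin r → Fin (b + 1) → Fin m → Bool) × (Fin n → Fin m → Bool) × (Fin m → ℕ) :=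
    fun v => (fun u t k => Nat.testBit (v k).1 (sw u + t),
      fun x k => if free x then Nat.testBit (v k).1 x else false,
      fun k => (v k).2) with henc
  set T : Finset ((Fin r → Fin (b + 1) → Fin m → Bool) × (Fin n → Fin m → Bool) × (Fin m → ℕ)) :=
    (Fintype.piFinset fun _ : Fin r => Finset.univ.erase (fun _ _ => false)) ×ˢ
    (Fintype.piFinset fun x : Fin n =>
      if free (x : ℕ) then (Finset.univ : Finset (Fin m → Bool)) else {fun _ => false}) ×ˢ
    (Fintype.piFinset fun _ : Fin m => Finset.range q) with hT
  have hmaps : ∀ v ∈ Full.filter (fun v => ¬ P v), enc v ∈ T := by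
    intro v hv
    rw [Finset.mem_filter] at hv
    obtain ⟨hvF, hvP⟩ := hv
    rw [hFull, Fintype.mem_piFinset] at hvF
    simp only [Finset.mem_product, Finset.mem_range] at hvF
    rw [hT, Finset.mem_product, Finset.mem_product]
    refine ⟨?_, ?_, ?_⟩
    · rw [Fintype.mem_piFinset]
      intro u
      rw [Finset.mem_erase]
      refine ⟨?_, Finset.mem_univ _⟩
      intro hconst
      apply hvP
      refine ⟨sw u, (hswf u u.2).1, (hswf u u.2).2.1, ?_⟩
      intro t ht k
      constructor
      · have : (enc v).1 u ⟨t, by omega⟩ k = false := by rw [hconst]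
        simpa [henc] using this
      · exact hjbit _ (hvF k).2 _ (le_trans (hswf u u.2).2.2 (Nat.le_add_right _ _))
    · rw [Fintype.mem_piFinset]
      intro x
      by_cases hx : free (x : ℕ)
      · rw [if_pos hx]; exact Finset.mem_univ _
      · rw [if_neg hx, Finset.mem_singleton]
        funext k
        simp only [henc]
        rw [if_neg hx]
    · rw [Fintype.mem_piFinset]
      intro k
      simp only [henc, Finset.mem_range]
      exact (hvF k).2
  have hinj : Set.InjOn enc ↑(Full.filter (fun v => ¬ P v)) := by
    intro v hv w hw hvw
    simp only [Finset.coe_filter, Set.mem_setOf_eq] at hv hw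
    obtain ⟨hvF, _⟩ := hv
    obtain ⟨hwF, _⟩ := hw
    rw [hFull, Fintype.mem_piFinset] at hvF hwF
    simp only [Finset.mem_product, Finset.mem_range] at hvF hwF
    simp only [henc, Prod.mk.injEq] at hvw
    obtain ⟨h1, h2, h3⟩ := hvw
    funext k
    have hj : (v k).2 = (w k).2 := congrFun h3 k
    have hi : (v k).1 = (w k).1 := by
      apply Nat.eq_of_testBit_eq
      intro x
      by_cases hxn : x < n
      · by_cases hx : free x
        · have := congrFun (congrFun h2 ⟨x, hxn⟩) k
          simp only at this
          rwa [if_pos hx, if_pos hx] at this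
        · simp only [hfree] at hx
          push_neg at hx
          obtain ⟨u, hu, hu1, hu2⟩ := hx
          have ht : x - sw u ≤ b := by omega
          have := congrFun (congrFun (congrFun h1 ⟨u, hu⟩) ⟨x - sw u, by omega⟩) k
          simp only at this
          have hx' : sw u + (x - sw u) = x := by omega
          rwa [hx'] at this
      · have hv2 : (v k).1 < 2 ^ x := lt_of_lt_of_le (hq2 ▸ (hvF k).1)
          (Nat.pow_le_pow_right (by norm_num) (by omega))
        have hw2 : (w k).1 < 2 ^ x := lt_of_lt_of_le (hq2 ▸ (hwF k).1)
          (Nat.pow_le_pow_right (by norm_num) (by omega))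
        rw [Nat.testBit_lt_two_pow hv2, Nat.testBit_lt_two_pow hw2]
    exact Prod.ext hi hj
  have hwincard : (Finset.univ.filter fun x : Fin n => ¬ free (x : ℕ)).card = r * (b + 1) := by
    have himg : (Finset.univ.filter fun x : Fin n => ¬ free (x : ℕ)) =
        Finset.image (fun p : Fin r × Fin (b + 1) =>
          (⟨sw p.1 + p.2, by have := hswf p.1 p.1.2; have := p.2.2; omega⟩ : Fin n))
          Finset.univ := by
      ext x
      simp only [Finset.mem_filter, Finset.mem_univ, true_and, Finset.mem_image, hfree]
      constructor
      · intro hx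
        push_neg at hx
        obtain ⟨u, hu, h1, h2⟩ := hx
        refine ⟨(⟨u, hu⟩, ⟨(x : ℕ) - sw u, by omega⟩), ?_⟩
        apply Fin.ext
        simp only [Fin.val_mk]
        omega
      · rintro ⟨⟨u, t⟩, rfl⟩
        push_neg
        refine ⟨u, u.2, ?_, ?_⟩
        · simp only [Fin.val_mk]; omega
        · simp only [Fin.val_mk]; have := t.2; omega
    rw [himg, Finset.card_image_of_injOn]
    · rw [Finset.card_univ]; simp [Fintype.card_prod]
    · rintro ⟨u, t⟩ - ⟨u', t'⟩ - hEq
      have hEq' : sw u + (t : ℕ) = sw u' + (t' : ℕ) := by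
        have := congrArg Fin.val hEq
        simpa using this
      have hu2 := u.2
      have hu2' := u'.2
      have h1 := hswf u u.2
      have h2 := hswf u' u'.2
      have e1 : ((u : ℕ) + 1) * (b + 1) ≤ c :=
        le_trans (Nat.mul_le_mul_right _ (by omega)) hrc
      have e2 : ((u' : ℕ) + 1) * (b + 1) ≤ c :=
        le_trans (Nat.mul_le_mul_right _ (by omega)) hrc
      have heq2 : ((u' : ℕ) + 1) * (b + 1) + (t : ℕ) = ((u : ℕ) + 1) * (b + 1) + (t' : ℕ) := by
        simp only [hsw] at hEq' h1 h2 ⊢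
        omega
      have huu : (u : ℕ) = (u' : ℕ) := by
        have d1 : ((t : ℕ) + ((u' : ℕ) + 1) * (b + 1)) / (b + 1) = (u' : ℕ) + 1 := by
          rw [Nat.add_mul_div_right _ _ (by omega)]
          rw [Nat.div_eq_of_lt t.2]
          omega
        have d2 : ((t' : ℕ) + ((u : ℕ) + 1) * (b + 1)) / (b + 1) = (u : ℕ) + 1 := by
          rw [Nat.add_mul_div_right _ _ (by omega)]
          rw [Nat.div_eq_of_lt t'.2]
          omega
        have : (t : ℕ) + ((u' : ℕ) + 1) * (b + 1) = (t' : ℕ) + ((u : ℕ) + 1) * (b + 1) := by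
          omega
        rw [this, d2] at d1
        omega
      have htt : (t : ℕ) = (t' : ℕ) := by
        have : ((u : ℕ) + 1) * (b + 1) = ((u' : ℕ) + 1) * (b + 1) := by rw [huu]
        omega
      exact Prod.ext (Fin.ext huu) (Fin.ext htt)
  have hTcard : T.card ≤ (2 ^ M - 1) ^ r * 2 ^ (N - r * M) := by
    rw [hT, Finset.card_product, Finset.card_product]
    have cA : (Fintype.piFinset fun _ : Fin r =>
        (Finset.univ.erase (fun _ _ => false) : Finset (Fin (b + 1) → Fin m → Bool))).card
        = (2 ^ M - 1) ^ r := by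
      rw [Fintype.card_piFinset, Finset.prod_const, Finset.card_univ, Fintype.card_fin]
      congr 1
      rw [Finset.card_erase_of_mem (Finset.mem_univ _), Finset.card_univ]
      rw [Fintype.card_fun, Fintype.card_fun]
      simp only [Fintype.card_bool, Fintype.card_fin]
      rw [← pow_mul, hM]
    have cB : (Fintype.piFinset fun x : Fin n =>
        if free (x : ℕ) then (Finset.univ : Finset (Fin m → Bool)) else {fun _ => false}).card
        = 2 ^ (m * (n - r * (b + 1))) := by
      rw [Fintype.card_piFinset]
      have : ∀ x : Fin n, (if free (x : ℕ) then (Finset.univ : Finset (Fin m → Bool))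
          else {fun _ => false}).card = if free (x : ℕ) then 2 ^ m else 1 := by
        intro x
        by_cases hx : free (x : ℕ)
        · rw [if_pos hx, if_pos hx, Finset.card_univ, Fintype.card_fun]
          simp
        · rw [if_neg hx, if_neg hx, Finset.card_singleton]
      rw [Finset.prod_congr rfl (fun x _ => this x), Finset.prod_ite, Finset.prod_const,
        Finset.prod_const, one_pow, mul_one, ← pow_mul]
      congr 1
      have hsum := Finset.card_filter_add_card_filter_not
        (s := (Finset.univ : Finset (Fin n))) (fun x : Fin n => free (x : ℕ))
      rw [Finset.card_univ, Fintype.card_fin] at hsum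
      beta_reduce at hsum
      have hfc : (Finset.univ.filter fun x : Fin n => free (x : ℕ)).card = n - r * (b + 1) := by
        omega
      rw [hfc]
    have cC : (Fintype.piFinset fun _ : Fin m => Finset.range q).card = 2 ^ (ℓ * m) := by
      rw [Fintype.card_piFinset, Finset.prod_const, Finset.card_range, Finset.card_univ,
        Fintype.card_fin, hq, ← pow_mul]
    rw [cA, cB, cC, ← pow_add]
    apply le_of_eq
    congr 2
    have hA : r * (b + 1) ≤ n := by omega
    have e1 : m * (n - r * (b + 1)) = m * n - m * (r * (b + 1)) := Nat.mul_sub m n _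
    have e2 : m * n = 2 * (ℓ * m) := by rw [hn]; ring
    have e3 : N = 3 * (ℓ * m) := by rw [hN]; ring
    have e4 : m * (r * (b + 1)) ≤ ℓ * m := by
      calc m * (r * (b + 1)) ≤ m * ℓ := Nat.mul_le_mul_left m (by omega)
      _ = ℓ * m := Nat.mul_comm m ℓ
    omega
  have hbad : (Full.filter (fun v => ¬ P v)).card ≤ (2 ^ M - 1) ^ r * 2 ^ (N - r * M) :=
    le_trans (Finset.card_le_card_of_injOn enc hmaps hinj) hTcard
  have hgood : 2 ^ N ≤ (Full.filter P).card + (2 ^ M - 1) ^ r * 2 ^ (N - r * M) := by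
    have := Finset.card_filter_add_card_filter_not (s := Full) P
    omega
  -- real arithmetic
  have hq3 : (q : ℝ) ^ (3 * m) = 2 ^ N := by
    rw [hq]; push_cast; rw [← pow_mul, hN]; ring_nf
  have h1M : (1 : ℕ) ≤ 2 ^ M := Nat.one_le_two_pow
  have key : (q : ℝ) ^ (3 * m) * (1 - (1 - ((2 : ℝ) ^ M)⁻¹) ^ r)
      = 2 ^ N - ((2 : ℝ) ^ M - 1) ^ r * 2 ^ (N - r * M) := by
    rw [hq3]
    have h1 : (1 - ((2 : ℝ) ^ M)⁻¹) = ((2 : ℝ) ^ M - 1) / 2 ^ M := by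
      field_simp
    have h2 : (2 : ℝ) ^ N = 2 ^ (N - r * M) * 2 ^ (M * r) := by
      rw [← pow_add]
      congr 1
      have : M * r = r * M := Nat.mul_comm M r
      omega
    rw [h1, div_pow, ← pow_mul, mul_sub, mul_one, h2]
    have h3 : (2 : ℝ) ^ (M * r) ≠ 0 := by positivity
    field_simp
  rw [key]
  have hcast : (((2 ^ M - 1) ^ r * 2 ^ (N - r * M) : ℕ) : ℝ)
      = ((2 : ℝ) ^ M - 1) ^ r * 2 ^ (N - r * M) := by
    push_cast [h1M]
    ring
  have hle : ((2 : ℝ) ^ N) ≤ ((Full.filter P).card : ℝ)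
      + (((2 ^ M - 1) ^ r * 2 ^ (N - r * M) : ℕ) : ℝ) := by
    exact_mod_cast hgood
  rw [hcast] at hle
  linarith
end
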